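/- arXiv:1607.07354 — 3 statements merged into one kernel-verified Lean document; each statement's English description precedes it below -/
import Mathlib

section
/- (Fundamental Theorem of Integral Calculus for the conformable proportional derivative) Let a < b with [a,b] ⊆ I. If f : [a,b] → ℝ is differentiable on [a,b] and f' is integrable on [a,b], then ∫_a^b D^α f(t) · e_0(b,t) d_α t = f(b) − f(a)·e_0(b,a). -/
open Set MeasureTheory

/-- The conformable proportional derivative `D^α f(t) = κ₁(t) f(t) + κ₀(t) f'(t)`. -/
noncomputable def Dconf (κ₀ κ₁ : ℝ → ℝ) (f : ℝ → ℝ) (t : ℝ) : ℝ :=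
  κ₁ t * f t + κ₀ t * deriv f t

/-- The conformable exponential `e_0(t,s) = exp(-∫_s^t κ₁/κ₀)`. -/
noncomputable def e0 (κ₀ κ₁ : ℝ → ℝ) (t s : ℝ) : ℝ :=
  Real.exp (-(∫ τ in s..t, κ₁ τ / κ₀ τ))

/-!
Dividing by `κ₀`, the integrand becomes `(f' + q f) · exp(∫_b^t q)` with `q = κ₁ / κ₀`, which is
the derivative of `f · exp(∫_b^t q)` (an integrating factor). The ordinary fundamental theorem of
calculus then gives `f(b) - f(a) exp(∫_b^a q) = f(b) - f(a) e₀(b,a)`.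
-/

theorem hasDerivAt_integral_of_continuousOn_Icc {g : ℝ → ℝ} {a b c x : ℝ}
    (hg : ContinuousOn g (Icc a b)) (hc : c ∈ Icc a b) (hx : x ∈ Ioo a b) :
    HasDerivAt (fun t => ∫ τ in c..t, g τ) (g x) x :=
  intervalIntegral.integral_hasDerivAt_right
    ((hg.mono (uIcc_subset_Icc hc (Ioo_subset_Icc_self hx))).intervalIntegrable)
    ((hg.mono Ioo_subset_Icc_self).stronglyMeasurableAtFilter isOpen_Ioo x hx)
    (hg.continuousAt (Icc_mem_nhds hx.1 hx.2))

theorem integral_deriv_add_mul_mul_exp_integral {f g : ℝ → ℝ} {a b : ℝ} (hab : a ≤ b)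
    (hg : ContinuousOn g (Icc a b)) (hf : ∀ t ∈ Icc a b, DifferentiableAt ℝ f t)
    (hf' : IntervalIntegrable (deriv f) volume a b) :
    ∫ t in a..b, (deriv f t + g t * f t) * Real.exp (∫ τ in b..t, g τ)
      = f b - f a * Real.exp (∫ τ in b..a, g τ) := by
  set E : ℝ → ℝ := fun t => Real.exp (∫ τ in b..t, g τ)
  have hb : b ∈ Icc a b := right_mem_Icc.mpr hab
  have hE : ContinuousOn E (Icc a b) := by
    have := intervalIntegral.continuousOn_primitive_interval' (μ := volume)
      ((hg.mono (uIcc_of_le hab).subset).intervalIntegrable) (right_mem_uIcc (a := a))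
    exact Real.continuous_exp.comp_continuousOn (uIcc_of_le hab ▸ this)
  have hfc : ContinuousOn f (Icc a b) := fun t ht => (hf t ht).continuousAt.continuousWithinAt
  have hderiv : ∀ x ∈ Ioo a b, HasDerivAt (fun t => f t * E t) ((deriv f x + g x * f x) * E x) x :=
    fun x hx => ((hf x (Ioo_subset_Icc_self hx)).hasDerivAt.mul
      (hasDerivAt_integral_of_continuousOn_Icc hg hb hx).exp).congr_deriv (by ring)
  have hint : IntervalIntegrable (fun t => (deriv f t + g t * f t) * E t) volume a b := by
    refine (hf'.add ?_).mul_continuousOn (uIcc_of_le hab ▸ hE)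
    exact ((hg.mul hfc).mono (uIcc_of_le hab).subset).intervalIntegrable
  rw [intervalIntegral.integral_eq_sub_of_hasDerivAt_of_le hab (hfc.mul hE) hderiv hint]
  simp [E]

theorem e0_eq_exp_integral (κ₀ κ₁ : ℝ → ℝ) (t s : ℝ) :
    e0 κ₀ κ₁ t s = Real.exp (∫ τ in t..s, κ₁ τ / κ₀ τ) := by
  rw [e0, intervalIntegral.integral_symm, neg_neg]

theorem conformable_ftc_general
    (I : Set ℝ) (κ₀ κ₁ : ℝ → ℝ)
    (hκ₀c : ContinuousOn κ₀ I) (hκ₁c : ContinuousOn κ₁ I)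
    (hκ₀pos : ∀ t ∈ I, 0 < κ₀ t)
    (a b : ℝ) (hab : a < b) (hIab : Icc a b ⊆ I)
    (f : ℝ → ℝ)
    (hfd : ∀ t ∈ Icc a b, DifferentiableAt ℝ f t)
    (hfint : IntervalIntegrable (deriv f) volume a b) :
    (∫ t in a..b, Dconf κ₀ κ₁ f t * e0 κ₀ κ₁ b t / κ₀ t)
      = f b - f a * e0 κ₀ κ₁ b a := by
  have hκ₀ne : ∀ t ∈ Icc a b, κ₀ t ≠ 0 := fun t ht => (hκ₀pos t (hIab ht)).ne'
  have hq : ContinuousOn (fun t => κ₁ t / κ₀ t) (Icc a b) :=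
    (hκ₁c.mono hIab).div (hκ₀c.mono hIab) hκ₀ne
  rw [e0_eq_exp_integral, ← integral_deriv_add_mul_mul_exp_integral hab.le hq hfd hfint]
  refine intervalIntegral.integral_congr fun t ht => ?_
  have := hκ₀ne t (uIcc_of_le hab.le ▸ ht)
  simp only [Dconf, e0_eq_exp_integral]
  field_simp
  ring

/-- Fundamental Theorem of Integral Calculus for the conformable proportional
derivative: `∫_a^b D^α f(t) e₀(b,t) d_α t = f(b) - f(a) e₀(b,a)`, where
`d_α t = dt/κ₀(t)`. -/
theorem conformable_ftc
    (I : Set ℝ) (κ₀ κ₁ : ℝ → ℝ)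
    (hκ₀c : ContinuousOn κ₀ I) (hκ₁c : ContinuousOn κ₁ I)
    (hκ₀pos : ∀ t ∈ I, 0 < κ₀ t) (hκ₁nn : ∀ t ∈ I, 0 ≤ κ₁ t)
    (a b : ℝ) (hab : a < b) (hIab : Icc a b ⊆ I)
    (f : ℝ → ℝ)
    (hfd : ∀ t ∈ Icc a b, DifferentiableAt ℝ f t)
    (hfint : IntervalIntegrable (deriv f) volume a b) :
    (∫ t in a..b, Dconf κ₀ κ₁ f t * e0 κ₀ κ₁ b t / κ₀ t)
      = f b - f a * e0 κ₀ κ₁ b a :=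
  conformable_ftc_general I κ₀ κ₁ hκ₀c hκ₁c hκ₀pos a b hab hIab f hfd hfint
end

section
/- (Picone Identity I) Let a < b with [a,b] ⊆ I, and let p, q : I → ℝ be continuous with p(t) > 0 for all t ∈ I. Suppose z is a solution on [a,b] of the Riccati equation D^α z(t) + q(t) + z(t)²/p(t) − κ₁(t)·z(t) = 0. Then for every differentiable function η on [a,b], the identity D^α[z·η²](t) + κ₁(t)·z(t)·η(t)² = p(t)·(D^α η(t))² − q(t)·η(t)² − p(t)·(D^α η(t) − z(t)·η(t)/p(t))² holds for all t ∈ [a,b], where D^α[z·η²] is the conformable derivative of the function t ↦ z(t)·η(t)². -/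
open Set

section ProductRule

variable (κ₀ κ₁ : ℝ → ℝ) {f g : ℝ → ℝ} {t : ℝ}

theorem Dconf_mul (hf : DifferentiableAt ℝ f t) (hg : DifferentiableAt ℝ g t) :
    Dconf κ₀ κ₁ (fun s => f s * g s) t
      = f t * Dconf κ₀ κ₁ g t + g t * Dconf κ₀ κ₁ f t - κ₁ t * f t * g t := by
  simp only [Dconf, deriv_fun_mul hf hg]
  ring

theorem Dconf_sq (hf : DifferentiableAt ℝ f t) :
    Dconf κ₀ κ₁ (fun s => f s ^ 2) t = 2 * f t * Dconf κ₀ κ₁ f t - κ₁ t * f t ^ 2 := by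
  simp only [Dconf, deriv_fun_pow hf 2]
  ring

end ProductRule

theorem picone_identity_I_general
    (I : Set ℝ) (κ₀ κ₁ : ℝ → ℝ)
    (a b : ℝ) (hIab : Icc a b ⊆ I)
    (p q : ℝ → ℝ)
    (hp : ∀ t ∈ I, 0 < p t)
    (z : ℝ → ℝ)
    (hzd : ∀ t ∈ Icc a b, DifferentiableAt ℝ z t)
    (hz : ∀ t ∈ Icc a b,
      Dconf κ₀ κ₁ z t + q t + (z t) ^ 2 / p t - κ₁ t * z t = 0)
    (η : ℝ → ℝ)
    (hη : ∀ t ∈ Icc a b, DifferentiableAt ℝ η t) :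
    ∀ t ∈ Icc a b,
      Dconf κ₀ κ₁ (fun s => z s * (η s) ^ 2) t + κ₁ t * z t * (η t) ^ 2
        = p t * (Dconf κ₀ κ₁ η t) ^ 2 - q t * (η t) ^ 2
          - p t * (Dconf κ₀ κ₁ η t - z t * η t / p t) ^ 2 := by
  intro t ht
  have hpt : p t ≠ 0 := (hp t (hIab ht)).ne'
  rw [Dconf_mul κ₀ κ₁ (g := fun s => η s ^ 2) (hzd t ht) ((hη t ht).pow 2),
    Dconf_sq κ₀ κ₁ (hη t ht)]
  have riccati : Dconf κ₀ κ₁ z t = κ₁ t * z t - q t - z t ^ 2 / p t := by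
    linear_combination hz t ht
  rw [riccati]
  -- both sides are now `2 z η D^α η - q η² - z² η² / p`, the right one after expanding the square
  field_simp
  ring

/-- Picone Identity I: if `z` solves the Riccati equation
`D^α z + q + z²/p - κ₁ z = 0` on `[a,b]`, then for every differentiable `η`,
`D^α[z η²] + κ₁ z η² = p (D^α η)² - q η² - p (D^α η - z η/p)²` on `[a,b]`. -/
theorem picone_identity_I
    (I : Set ℝ) (κ₀ κ₁ : ℝ → ℝ)
    (hκ₀c : ContinuousOn κ₀ I) (hκ₁c : ContinuousOn κ₁ I)
    (hκ₀pos : ∀ t ∈ I, 0 < κ₀ t) (hκ₁nn : ∀ t ∈ I, 0 ≤ κ₁ t)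
    (a b : ℝ) (hab : a < b) (hIab : Icc a b ⊆ I)
    (p q : ℝ → ℝ)
    (hpc : ContinuousOn p I) (hqc : ContinuousOn q I)
    (hp : ∀ t ∈ I, 0 < p t)
    (z : ℝ → ℝ)
    (hzd : ∀ t ∈ Icc a b, DifferentiableAt ℝ z t)
    (hzDc : ContinuousOn (Dconf κ₀ κ₁ z) (Icc a b))
    (hz : ∀ t ∈ Icc a b,
      Dconf κ₀ κ₁ z t + q t + (z t) ^ 2 / p t - κ₁ t * z t = 0)
    (η : ℝ → ℝ)
    (hη : ∀ t ∈ Icc a b, DifferentiableAt ℝ η t) :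
    ∀ t ∈ Icc a b,
      Dconf κ₀ κ₁ (fun s => z s * (η s) ^ 2) t + κ₁ t * z t * (η t) ^ 2
        = p t * (Dconf κ₀ κ₁ η t) ^ 2 - q t * (η t) ^ 2
          - p t * (Dconf κ₀ κ₁ η t - z t * η t / p t) ^ 2 :=
  picone_identity_I_general I κ₀ κ₁ a b hIab p q hp z hzd hz η hη
end

section
/- (Lyapunov Inequality) Let 0 ≤ a < b with [a,b] ⊆ I ⊆ [0,∞), and let q : I → ℝ be continuous with q(t) > 0 for all t ∈ I. If the equation D^α[D^α x](t) + q(t)·x(t) = 0 has a nontrivial solution x on [a,b] with x(a) = x(b) = 0, then ∫_a^b q(t)·e_0(b,t) d_α t ≥ 4·e_0(b,a)/h₁(b,a). -/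
/-!
With the integrating factor `e₀(b,·)`, the functions `u = e₀(b,·) x` and `v = e₀(b,·) D^α x`
solve the weighted first-order system `u' = v w`, `v' = -q u w`, where `w = 1/κ₀`. If `|u|`
attains its maximum `M > 0` at `c`, integrating `u'` over `[a,c]` and over `[c,b]` gives
`2M ≤ ∫ |v| w`. Weighted Cauchy–Schwarz and the energy identity `∫ v² w = ∫ q u² w`
(integration by parts, as `u` vanishes at both ends) then give
`4M² ≤ (∫ w) (∫ q u² w) ≤ M² (∫ w) (∫ q w)`. Finally `e₀(b,t) ≥ e₀(b,a)` on `[a,b]`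
because `κ₁ ≥ 0`.
-/

open Set

open MeasureTheory intervalIntegral

section

variable {a b : ℝ}

theorem two_mul_abs_le_integral_abs_deriv {c : ℝ} {u u' : ℝ → ℝ} (hc : c ∈ Icc a b)
    (hu : ContinuousOn u (Icc a b)) (hu' : ∀ t ∈ Ioo a b, HasDerivAt u (u' t) t)
    (hint : IntervalIntegrable u' volume a b) (hua : u a = 0) (hub : u b = 0) :
    2 * |u c| ≤ ∫ t in a..b, |u' t| := by
  have hc' : c ∈ uIcc a b := Icc_subset_uIcc hc
  have hint_ac := hint.mono_set (uIcc_subset_uIcc_left hc')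
  have hint_cb := hint.mono_set (uIcc_subset_uIcc_right hc')
  have hftc_ac : ∫ t in a..c, u' t = u c := by
    rw [integral_eq_sub_of_hasDerivAt_of_le hc.1 (hu.mono (Icc_subset_Icc_right hc.2))
      (fun t ht => hu' t ⟨ht.1, ht.2.trans_le hc.2⟩) hint_ac, hua, sub_zero]
  have hftc_cb : ∫ t in c..b, u' t = -u c := by
    rw [integral_eq_sub_of_hasDerivAt_of_le hc.2 (hu.mono (Icc_subset_Icc_left hc.1))
      (fun t ht => hu' t ⟨hc.1.trans_lt ht.1, ht.2⟩) hint_cb, hub, zero_sub]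
  calc 2 * |u c| = |∫ t in a..c, u' t| + |∫ t in c..b, u' t| := by
        rw [hftc_ac, hftc_cb, abs_neg, two_mul]
    _ ≤ (∫ t in a..c, |u' t|) + ∫ t in c..b, |u' t| :=
        add_le_add (abs_integral_le_integral_abs hc.1) (abs_integral_le_integral_abs hc.2)
    _ = ∫ t in a..b, |u' t| := integral_add_adjacent_intervals hint_ac.abs hint_cb.abs

theorem sq_integral_mul_le_integral_mul_integral_sq_mul (hab : a ≤ b) {f g : ℝ → ℝ}
    (hf : ContinuousOn f (Icc a b)) (hg : ContinuousOn g (Icc a b))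
    (hg0 : ∀ t ∈ Icc a b, 0 ≤ g t) :
    (∫ t in a..b, f t * g t) ^ 2 ≤ (∫ t in a..b, g t) * ∫ t in a..b, f t ^ 2 * g t := by
  have hg_int : IntervalIntegrable g volume a b := hg.intervalIntegrable_of_Icc hab
  have hfg_int : IntervalIntegrable (fun t => f t * g t) volume a b :=
    (hf.mul hg).intervalIntegrable_of_Icc hab
  have hf2g_int : IntervalIntegrable (fun t => f t ^ 2 * g t) volume a b :=
    ((hf.pow 2).mul hg).intervalIntegrable_of_Icc hab
  have hquad : ∀ s : ℝ, 0 ≤ (∫ t in a..b, g t) * (s * s) + (-2 * ∫ t in a..b, f t * g t) * s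
      + ∫ t in a..b, f t ^ 2 * g t := by
    intro s
    have hexpand : ∫ t in a..b, (f t - s) ^ 2 * g t = ∫ t in a..b,
        (s * s * g t + (-2 * s) * (f t * g t) + f t ^ 2 * g t) :=
      integral_congr fun t _ => by ring
    rw [integral_add ((hg_int.const_mul _).add (hfg_int.const_mul _)) hf2g_int,
      integral_add (hg_int.const_mul _) (hfg_int.const_mul _),
      intervalIntegral.integral_const_mul, intervalIntegral.integral_const_mul] at hexpand
    have hnonneg : 0 ≤ ∫ t in a..b, (f t - s) ^ 2 * g t :=
      integral_nonneg hab fun t ht => mul_nonneg (sq_nonneg _) (hg0 t ht)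
    linarith
  have := discrim_le_zero hquad
  rw [discrim] at this
  linarith

section WeightedSystem

variable {w Q u v : ℝ → ℝ}

theorem integral_sq_mul_eq_integral_mul_sq_mul (hab : a ≤ b) (hw : ContinuousOn w (Icc a b))
    (hQ : ContinuousOn Q (Icc a b)) (hu : ContinuousOn u (Icc a b))
    (hv : ContinuousOn v (Icc a b)) (hu' : ∀ t ∈ Ioo a b, HasDerivAt u (v t * w t) t)
    (hv' : ∀ t ∈ Ioo a b, HasDerivAt v (-(Q t * u t * w t)) t) (hua : u a = 0) (hub : u b = 0) :
    ∫ t in a..b, v t ^ 2 * w t = ∫ t in a..b, Q t * u t ^ 2 * w t := by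
  have hv2w_int : IntervalIntegrable (fun t => v t ^ 2 * w t) volume a b :=
    ((hv.pow 2).mul hw).intervalIntegrable_of_Icc hab
  have hQu2w_int : IntervalIntegrable (fun t => Q t * u t ^ 2 * w t) volume a b :=
    ((hQ.mul (hu.pow 2)).mul hw).intervalIntegrable_of_Icc hab
  have huv' : ∀ t ∈ Ioo a b,
      HasDerivAt (fun s => u s * v s) (v t ^ 2 * w t - Q t * u t ^ 2 * w t) t := fun t ht =>
    ((hu' t ht).mul (hv' t ht)).congr_deriv (by ring)
  have := integral_eq_sub_of_hasDerivAt_of_le hab (hu.mul hv) huv' (hv2w_int.sub hQu2w_int)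
  rwa [integral_sub hv2w_int hQu2w_int, Pi.mul_apply, Pi.mul_apply, hua, hub, zero_mul, zero_mul,
    sub_zero, sub_eq_zero] at this

theorem four_div_integral_le_integral_mul_of_hasDerivAt (hab : a < b)
    (hw : ContinuousOn w (Icc a b)) (hw0 : ∀ t ∈ Icc a b, 0 < w t)
    (hQ : ContinuousOn Q (Icc a b)) (hQ0 : ∀ t ∈ Icc a b, 0 ≤ Q t)
    (hu : ContinuousOn u (Icc a b)) (hv : ContinuousOn v (Icc a b))
    (hu' : ∀ t ∈ Ioo a b, HasDerivAt u (v t * w t) t)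
    (hv' : ∀ t ∈ Ioo a b, HasDerivAt v (-(Q t * u t * w t)) t)
    (hua : u a = 0) (hub : u b = 0) (hu_ne : ∃ t ∈ Icc a b, u t ≠ 0) :
    4 / (∫ t in a..b, w t) ≤ ∫ t in a..b, Q t * w t := by
  obtain ⟨c, hc, hc_max⟩ := isCompact_Icc.exists_isMaxOn (nonempty_Icc.2 hab.le) hu.abs
  set M := |u c|
  have hM : 0 < M := by
    obtain ⟨t, ht, hut⟩ := hu_ne
    exact (abs_pos.2 hut).trans_le (hc_max ht)
  have hW : 0 < ∫ t in a..b, w t :=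
    intervalIntegral_pos_of_pos_on (hw.intervalIntegrable_of_Icc hab.le)
      (fun t ht => hw0 t (Ioo_subset_Icc_self ht)) hab
  have h2M : 2 * M ≤ ∫ t in a..b, |v t| * w t := by
    refine (two_mul_abs_le_integral_abs_deriv hc hu hu'
      ((hv.mul hw).intervalIntegrable_of_Icc hab.le) hua hub).trans_eq (integral_congr ?_)
    intro t ht
    rw [uIcc_of_le hab.le] at ht
    simp only [abs_mul, abs_of_pos (hw0 t ht)]
  have hQu2w : ∫ t in a..b, Q t * u t ^ 2 * w t ≤ M ^ 2 * ∫ t in a..b, Q t * w t := by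
    rw [← intervalIntegral.integral_const_mul]
    refine integral_mono_on hab.le
      (((hQ.mul (hu.pow 2)).mul hw).intervalIntegrable_of_Icc hab.le)
      ((continuousOn_const.mul (hQ.mul hw)).intervalIntegrable_of_Icc hab.le) fun t ht => ?_
    have hut : u t ^ 2 ≤ M ^ 2 := sq_le_sq.2 ((hc_max ht).trans_eq (abs_abs _).symm)
    linarith [mul_le_mul_of_nonneg_right hut (mul_nonneg (hQ0 t ht) (hw0 t ht).le)]
  have key : 4 * M ^ 2 ≤ (∫ t in a..b, w t) * (M ^ 2 * ∫ t in a..b, Q t * w t) :=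
    calc 4 * M ^ 2 = (2 * M) ^ 2 := by ring
      _ ≤ (∫ t in a..b, |v t| * w t) ^ 2 := pow_le_pow_left₀ (by positivity) h2M 2
      _ ≤ (∫ t in a..b, w t) * ∫ t in a..b, |v t| ^ 2 * w t :=
        sq_integral_mul_le_integral_mul_integral_sq_mul hab.le hv.abs hw fun t ht =>
          (hw0 t ht).le
      _ = (∫ t in a..b, w t) * ∫ t in a..b, Q t * u t ^ 2 * w t := by
        simp only [sq_abs]
        rw [integral_sq_mul_eq_integral_mul_sq_mul hab.le hw hQ hu hv hu' hv' hua hub]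
      _ ≤ (∫ t in a..b, w t) * (M ^ 2 * ∫ t in a..b, Q t * w t) :=
        mul_le_mul_of_nonneg_left hQu2w hW.le
  rw [div_le_iff₀ hW]
  nlinarith [pow_pos hM 2]

end WeightedSystem

section Conformable

variable {κ₀ κ₁ : ℝ → ℝ}

theorem hasDerivAt_e0 {t : ℝ} (hr : ContinuousOn (fun τ => κ₁ τ / κ₀ τ) (Icc a b))
    (ht : t ∈ Ioo a b) : HasDerivAt (e0 κ₀ κ₁ b) (e0 κ₀ κ₁ b t * (κ₁ t / κ₀ t)) t := by
  have hint : IntervalIntegrable (fun τ => κ₁ τ / κ₀ τ) volume t b :=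
    (hr.mono (Icc_subset_Icc_left ht.1.le)).intervalIntegrable_of_Icc ht.2.le
  have hmeas := (hr.mono Ioo_subset_Icc_self).stronglyMeasurableAtFilter (μ := volume)
    isOpen_Ioo t ht
  have hcont := hr.continuousAt (Icc_mem_nhds ht.1 ht.2)
  exact (integral_hasDerivAt_left hint hmeas hcont).neg.exp.congr_deriv (by rw [neg_neg]; rfl)

theorem continuousOn_e0 (hab : a ≤ b) (hr : ContinuousOn (fun τ => κ₁ τ / κ₀ τ) (Icc a b)) :
    ContinuousOn (e0 κ₀ κ₁ b) (Icc a b) := by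
  have := continuousOn_primitive_interval_left (μ := volume)
    (by rw [uIcc_of_le hab]; exact hr.integrableOn_Icc)
  rw [uIcc_of_le hab] at this
  exact Real.continuous_exp.comp_continuousOn this.neg

theorem e0_le_e0 {t : ℝ} (hr : ContinuousOn (fun τ => κ₁ τ / κ₀ τ) (Icc a b))
    (hr0 : ∀ τ ∈ Icc a b, 0 ≤ κ₁ τ / κ₀ τ) (ht : t ∈ Icc a b) :
    e0 κ₀ κ₁ b a ≤ e0 κ₀ κ₁ b t := by
  refine Real.exp_le_exp.2 (neg_le_neg (integral_mono_interval ht.1 ht.2 le_rfl ?_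
    (hr.intervalIntegrable_of_Icc (ht.1.trans ht.2))))
  exact ae_restrict_of_forall_mem measurableSet_Ioc fun τ hτ => hr0 τ (Ioc_subset_Icc_self hτ)

theorem e0_mul_integral_le_integral_mul_e0 (hab : a ≤ b)
    (hr : ContinuousOn (fun τ => κ₁ τ / κ₀ τ) (Icc a b)) (hr0 : ∀ τ ∈ Icc a b, 0 ≤ κ₁ τ / κ₀ τ)
    {g : ℝ → ℝ} (hg : ContinuousOn g (Icc a b)) (hg0 : ∀ t ∈ Icc a b, 0 ≤ g t) :
    e0 κ₀ κ₁ b a * ∫ t in a..b, g t ≤ ∫ t in a..b, g t * e0 κ₀ κ₁ b t := by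
  rw [← intervalIntegral.integral_const_mul]
  refine integral_mono_on hab ((continuousOn_const.mul hg).intervalIntegrable_of_Icc hab)
    ((hg.mul (continuousOn_e0 hab hr)).intervalIntegrable_of_Icc hab) fun t ht => ?_
  rw [mul_comm]
  exact mul_le_mul_of_nonneg_left (e0_le_e0 hr hr0 ht) (hg0 t ht)

theorem hasDerivAt_e0_mul {f : ℝ → ℝ} {t : ℝ}
    (hr : ContinuousOn (fun τ => κ₁ τ / κ₀ τ) (Icc a b)) (ht : t ∈ Ioo a b) (hκ₀ : κ₀ t ≠ 0)
    (hf : DifferentiableAt ℝ f t) :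
    HasDerivAt (fun s => e0 κ₀ κ₁ b s * f s) (e0 κ₀ κ₁ b t * Dconf κ₀ κ₁ f t * (1 / κ₀ t)) t :=
  ((hasDerivAt_e0 hr ht).mul hf.hasDerivAt).congr_deriv (by rw [Dconf]; field_simp)

end Conformable

end

theorem lyapunov_inequality_general
    (I : Set ℝ)
    (κ₀ κ₁ : ℝ → ℝ)
    (hκ₀c : ContinuousOn κ₀ I) (hκ₁c : ContinuousOn κ₁ I)
    (hκ₀pos : ∀ t ∈ I, 0 < κ₀ t) (hκ₁nn : ∀ t ∈ I, 0 ≤ κ₁ t)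
    (a b : ℝ) (hab : a < b) (hIab : Icc a b ⊆ I)
    (q : ℝ → ℝ) (hqc : ContinuousOn q I) (hq : ∀ t ∈ I, 0 < q t)
    (x : ℝ → ℝ)
    (hxd : ∀ t ∈ Icc a b, DifferentiableAt ℝ x t)
    (hxd2 : ∀ t ∈ Icc a b, DifferentiableAt ℝ (Dconf κ₀ κ₁ x) t)
    (hxeq : ∀ t ∈ Icc a b,
      Dconf κ₀ κ₁ (Dconf κ₀ κ₁ x) t + q t * x t = 0)
    (hxa : x a = 0) (hxb : x b = 0)
    (hxnontriv : ∃ t ∈ Icc a b, x t ≠ 0) :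
    (∫ t in a..b, q t * e0 κ₀ κ₁ b t / κ₀ t)
      ≥ 4 * e0 κ₀ κ₁ b a / (∫ t in a..b, 1 / κ₀ t) := by
  have hκ₀ : ∀ t ∈ Icc a b, 0 < κ₀ t := fun t ht => hκ₀pos t (hIab ht)
  have hκ₀_ne : ∀ t ∈ Icc a b, κ₀ t ≠ 0 := fun t ht => (hκ₀ t ht).ne'
  have hq0 : ∀ t ∈ Icc a b, 0 ≤ q t := fun t ht => (hq t (hIab ht)).le
  have hr := (hκ₁c.mono hIab).div (hκ₀c.mono hIab) hκ₀_ne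
  have hr0 : ∀ t ∈ Icc a b, 0 ≤ κ₁ t / κ₀ t := fun t ht =>
    div_nonneg (hκ₁nn t (hIab ht)) (hκ₀ t ht).le
  have hE := continuousOn_e0 hab.le hr
  have hw : ContinuousOn (fun t => 1 / κ₀ t) (Icc a b) :=
    continuousOn_const.div (hκ₀c.mono hIab) hκ₀_ne
  have hv' : ∀ t ∈ Ioo a b, HasDerivAt (fun s => e0 κ₀ κ₁ b s * Dconf κ₀ κ₁ x s)
      (-(q t * (e0 κ₀ κ₁ b t * x t) * (1 / κ₀ t))) t := fun t ht =>
    (hasDerivAt_e0_mul hr ht (hκ₀_ne t (Ioo_subset_Icc_self ht))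
      (hxd2 t (Ioo_subset_Icc_self ht))).congr_deriv
      (by rw [eq_neg_of_add_eq_zero_left (hxeq t (Ioo_subset_Icc_self ht))]; ring)
  have hweighted : 4 / (∫ t in a..b, 1 / κ₀ t) ≤ ∫ t in a..b, q t / κ₀ t := by
    simpa only [mul_one_div] using four_div_integral_le_integral_mul_of_hasDerivAt hab hw
      (fun t ht => one_div_pos.2 (hκ₀ t ht)) (hqc.mono hIab) hq0
      (hE.mul fun t ht => (hxd t ht).continuousAt.continuousWithinAt)
      (hE.mul fun t ht => (hxd2 t ht).continuousAt.continuousWithinAt)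
      (fun t ht => hasDerivAt_e0_mul hr ht (hκ₀_ne t (Ioo_subset_Icc_self ht))
        (hxd t (Ioo_subset_Icc_self ht))) hv' (by simp [hxa]) (by simp [hxb])
      (hxnontriv.imp fun t ⟨ht, hxt⟩ => ⟨ht, mul_ne_zero (Real.exp_pos _).ne' hxt⟩)
  calc 4 * e0 κ₀ κ₁ b a / (∫ t in a..b, 1 / κ₀ t)
      = e0 κ₀ κ₁ b a * (4 / ∫ t in a..b, 1 / κ₀ t) := by ring
    _ ≤ e0 κ₀ κ₁ b a * ∫ t in a..b, q t / κ₀ t :=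
      mul_le_mul_of_nonneg_left hweighted (Real.exp_pos _).le
    _ ≤ ∫ t in a..b, q t / κ₀ t * e0 κ₀ κ₁ b t :=
      e0_mul_integral_le_integral_mul_e0 hab.le hr hr0 ((hqc.mono hIab).div (hκ₀c.mono hIab)
        hκ₀_ne) fun t ht => div_nonneg (hq0 t ht) (hκ₀ t ht).le
    _ = ∫ t in a..b, q t * e0 κ₀ κ₁ b t / κ₀ t :=
      integral_congr fun t _ => div_mul_eq_mul_div ..

/-- Lyapunov's inequality: if `D^α D^α x + q x = 0` has a nontrivial solution on
`[a,b]` with `x(a) = x(b) = 0`, then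
`∫_a^b q(t) e₀(b,t) d_α t ≥ 4 e₀(b,a) / h₁(b,a)`. -/
theorem lyapunov_inequality
    (I : Set ℝ) (hIsub : I ⊆ Ici 0)
    (κ₀ κ₁ : ℝ → ℝ)
    (hκ₀c : ContinuousOn κ₀ I) (hκ₁c : ContinuousOn κ₁ I)
    (hκ₀pos : ∀ t ∈ I, 0 < κ₀ t) (hκ₁nn : ∀ t ∈ I, 0 ≤ κ₁ t)
    (a b : ℝ) (ha : 0 ≤ a) (hab : a < b) (hIab : Icc a b ⊆ I)
    (q : ℝ → ℝ) (hqc : ContinuousOn q I) (hq : ∀ t ∈ I, 0 < q t)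
    (x : ℝ → ℝ)
    (hxd : ∀ t ∈ Icc a b, DifferentiableAt ℝ x t)
    (hxDc : ContinuousOn (Dconf κ₀ κ₁ x) (Icc a b))
    (hxd2 : ∀ t ∈ Icc a b, DifferentiableAt ℝ (Dconf κ₀ κ₁ x) t)
    (hxDDc : ContinuousOn (Dconf κ₀ κ₁ (Dconf κ₀ κ₁ x)) (Icc a b))
    (hxeq : ∀ t ∈ Icc a b,
      Dconf κ₀ κ₁ (Dconf κ₀ κ₁ x) t + q t * x t = 0)
    (hxa : x a = 0) (hxb : x b = 0)
    (hxnontriv : ∃ t ∈ Icc a b, x t ≠ 0) :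
    (∫ t in a..b, q t * e0 κ₀ κ₁ b t / κ₀ t)
      ≥ 4 * e0 κ₀ κ₁ b a / (∫ t in a..b, 1 / κ₀ t) :=
  lyapunov_inequality_general I κ₀ κ₁ hκ₀c hκ₁c hκ₀pos hκ₁nn a b hab hIab q hqc hq x hxd hxd2 hxeq
    hxa hxb hxnontriv
end
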